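/- arXiv:2306.05371 — 2 statements merged into one kernel-verified Lean document; each statement's English description precedes it below -/
import Mathlib

section
/- Let 0 < c < 1 and 0 < β < 1, and set γ = 1 − β. The associated Meixner polynomials 𝓜_n(x; β, c, γ), defined by the recurrence c·𝓜_{n+1}(x) = [(c−1)x + (c+1)(n+γ) + βc]·𝓜_n(x) − (n+γ)(n+γ+β−1)·𝓜_{n−1}(x) with 𝓜_{−1} = 0, 𝓜_0 = 1, satisfy 𝓜_n(x; β, c, 1−β) = M_n(x + β − 1; 2−β, c) for all n ≥ 0, where M_n(y; b, c) = (b)_n Σ_{k=0}^n [(−n)_k (−y)_k / ((b)_k k!)] (1 − 1/c)^k are the classical Meixner polynomials. -/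
/-- Pochhammer symbol (rising factorial) of a real number. -/
noncomputable def poch (a : ℝ) (k : ℕ) : ℝ := ∏ i ∈ Finset.range k, (a + i)

lemma poch_zero (a : ℝ) : poch a 0 = 1 := by simp [poch]

lemma poch_succ (a : ℝ) (k : ℕ) : poch a (k+1) = poch a k * (a + k) := by
  simp [poch, Finset.prod_range_succ]

lemma poch_succ' (a : ℝ) (k : ℕ) : poch a (k+1) = a * poch (a+1) k := by
  have h : ∀ i ∈ Finset.range k, a + ((i+1 : ℕ) : ℝ) = (a+1) + i := fun i _ => by push_cast; ring
  simp only [poch, Finset.prod_range_succ', Nat.cast_zero, add_zero,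
    Finset.prod_congr rfl h]
  ring

lemma poch_neg_nat (n k : ℕ) (h : n < k) : poch (-(n:ℝ)) k = 0 :=
  Finset.prod_eq_zero (Finset.mem_range.mpr h) (by simp)

lemma poch_pos {a : ℝ} (h : 0 < a) (k : ℕ) : 0 < poch a k :=
  Finset.prod_pos fun i _ => by positivity

lemma poch_congr {a a' : ℝ} (h : a = a') (k : ℕ) : poch a k = poch a' k := by rw [h]

/-- The associated Meixner polynomials, defined by their three-term recurrence
(with association parameter γ and the convention 𝓜₋₁ = 0, 𝓜₀ = 1). -/
def IsAssocMeixner (β c γ : ℝ) (M : ℕ → ℝ → ℝ) : Prop :=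
  (∀ x, M 0 x = 1) ∧
  (∀ x, c * M 1 x = (c - 1) * x + (c + 1) * γ + β * c) ∧
  (∀ x, ∀ n : ℕ,
    c * M (n + 2) x =
      ((c - 1) * x + (c + 1) * ((n : ℝ) + 1 + γ) + β * c) * M (n + 1) x -
        ((n : ℝ) + 1 + γ) * ((n : ℝ) + 1 + γ + β - 1) * M n x)

/-- Meixner polynomials \(M_n(y;b,c)\). -/
noncomputable def meixner (b c y : ℝ) (n : ℕ) : ℝ :=
  poch b n * ∑ k ∈ Finset.range (n + 1),
    poch (-(n : ℝ)) k * poch (-y) k / (poch b k * (Nat.factorial k)) * (1 - 1 / c) ^ k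

noncomputable def Tf (b c y a : ℝ) (k : ℕ) : ℝ :=
  poch a k * poch (-y) k / (poch b k * (Nat.factorial k)) * (1 - 1 / c) ^ k

lemma meixner_eq_sum (b c y : ℝ) (n N : ℕ) (h : n < N) :
    meixner b c y n = poch b n * ∑ k ∈ Finset.range N, Tf b c y (-(n:ℝ)) k := by
  unfold meixner Tf
  congr 1
  apply Finset.sum_subset (Finset.range_subset_range.mpr h)
  intro k _ hk
  rw [poch_neg_nat n k (by simp only [Finset.mem_range] at hk; omega)]
  simp

lemma meixner_zero (b c y : ℝ) : meixner b c y 0 = 1 := by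
  simp [meixner, poch_zero]

set_option maxHeartbeats 4000000 in
lemma meixner_rec (b c y : ℝ) (hb : 0 < b) (hc : c ≠ 0) (n : ℕ) :
    c * meixner b c y (n+2) =
      ((c-1)*y + ((n:ℝ)+1) + (((n:ℝ)+1)+b)*c) * meixner b c y (n+1)
      - ((n:ℝ)+1)*((n:ℝ)+b) * meixner b c y n := by
  have hcq : c * (1 - 1/c) = c - 1 := by field_simp
  set N := n + 3 with hN
  have e2 : -(((n+2:ℕ)):ℝ) = -((n:ℝ)+2) := by push_cast; ring
  have e1 : -(((n+1:ℕ)):ℝ) = -((n:ℝ)+1) := by push_cast; ring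
  rw [meixner_eq_sum b c y (n+2) N (by omega), meixner_eq_sum b c y (n+1) N (by omega),
      meixner_eq_sum b c y n N (by omega), e2, e1]
  set E : ℕ → ℝ := fun k => (c-1) * poch b (n+1) *
    (poch (-((n:ℝ)+1)) k * poch (-y) (k+1) / (poch b k * (Nat.factorial k)) * (1 - 1/c) ^ k)
    with hE
  set E' : ℕ → ℝ := fun k => if k = 0 then 0 else c * poch b (n+1) *
    (poch (-((n:ℝ)+1)) (k-1) * poch (-y) k / (poch b (k-1) * (Nat.factorial (k-1)))
      * (1 - 1/c) ^ k) with hE'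
  have hEsum : ∑ k ∈ Finset.range N, E k = ∑ k ∈ Finset.range N, E' k := by
    rw [hN, show n+3 = (n+2)+1 from rfl, Finset.sum_range_succ E (n+2),
      Finset.sum_range_succ' E' (n+2)]
    have h0 : E' 0 = 0 := by simp [hE']
    have hlast : E (n+2) = 0 := by
      have hz : poch (-((n:ℝ)+1)) (n+2) = 0 := by
        rw [← e1]; exact poch_neg_nat (n+1) (n+2) (by omega)
      simp only [hE]
      rw [hz]
      ring
    have hshift : ∀ k, E' (k+1) = E k := by
      intro k
      simp only [hE, hE', if_neg (Nat.succ_ne_zero k), Nat.add_sub_cancel]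
      rw [pow_succ]
      linear_combination (poch b (n+1) * (poch (-((n:ℝ)+1)) k * poch (-y) (k+1)
        / (poch b k * (Nat.factorial k)) * (1 - 1/c) ^ k)) * hcq
    simp only [hshift, h0, hlast, add_zero]
  have perk : ∀ k ∈ Finset.range N,
      c * poch b (n+2) * Tf b c y (-((n:ℝ)+2)) k
      = (c-1) * poch b (n+1) * ((k:ℝ) * Tf b c y (-((n:ℝ)+1)) k) - E' k
        + ((((n:ℝ)+1) + ((n:ℝ)+1+b) * c) * poch b (n+1)) * Tf b c y (-((n:ℝ)+1)) k
        - ((((n:ℝ)+1) * ((n:ℝ)+b)) * poch b n) * Tf b c y (-(n:ℝ)) k := by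
    intro k _
    have hne : ((n:ℝ)+1) ≠ 0 := by positivity
    match k with
    | 0 =>
      simp only [Tf, hE', if_pos rfl, poch_zero, Nat.factorial_zero, pow_zero,
        Nat.cast_zero, Nat.cast_one]
      rw [show poch b (n+2) = poch b n * (b+(n:ℝ)) * (b+(n:ℝ)+1) by
        rw [show n+2 = (n+1)+1 from rfl, poch_succ, poch_succ]; push_cast; ring]
      rw [poch_succ b n]
      ring
    | (kk+1) =>
      have h1 : poch (-((n:ℝ)+2)) (kk+1) = (-((n:ℝ)+2)) * poch (-((n:ℝ)+1)) kk := by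
        rw [poch_succ', poch_congr (show -((n:ℝ)+2)+1 = -((n:ℝ)+1) by ring)]
      have h2 : poch (-((n:ℝ)+1)) (kk+1) = poch (-((n:ℝ)+1)) kk * (-((n:ℝ)+1) + kk) :=
        poch_succ _ _
      have hA : poch (-((n:ℝ)+1)) kk * (-((n:ℝ)+1) + kk) = (-((n:ℝ)+1)) * poch (-(n:ℝ)) kk := by
        rw [← poch_succ, poch_succ', poch_congr (show -((n:ℝ)+1)+1 = -(n:ℝ) by ring)]
      have h0 : poch (-(n:ℝ)) (kk+1) = poch (-(n:ℝ)) kk * (-(n:ℝ) + kk) := poch_succ _ _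
      have hpb : (0:ℝ) < poch b kk := poch_pos hb kk
      have hfk : ((Nat.factorial kk : ℕ) : ℝ) ≠ 0 := by
        exact_mod_cast (Nat.factorial_pos kk).ne'
      have hbk : (0:ℝ) < b + kk := by positivity
      have hk1 : ((kk:ℝ)+1) ≠ 0 := by positivity
      simp only [Tf, hE', if_neg (Nat.succ_ne_zero kk), Nat.add_sub_cancel]
      rw [h1, h2, h0,
        show poch b (n+2) = poch b n * (b+(n:ℝ)) * (b+(n:ℝ)+1) by
          rw [show n+2 = (n+1)+1 from rfl, poch_succ, poch_succ]; push_cast; ring,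
        poch_succ b n, poch_succ b kk, Nat.factorial_succ]
      push_cast
      set Q := (1 - 1/c) ^ (kk+1) with hQ2
      set A := poch (-((n:ℝ)+1)) kk with hA2
      set Y := poch (-y) (kk+1) with hY2
      set P := poch b kk with hP2
      set R := poch b n with hR2
      clear_value Q A Y P R
      have h3' : ((n:ℝ)+1) * poch (-(n:ℝ)) kk = A * ((n:ℝ)+1-(kk:ℝ)) := by
        linear_combination hA
      clear hEsum hE hE' h1 h2 hA hQ2 hA2 hY2 hP2 hR2 hN hcq h0 e1 e2
      have main : c * (R * (b + (n:ℝ)) * (b + (n:ℝ) + 1)) *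
            (-((n:ℝ) + 2) * A * Y
              / (P * (b + (kk:ℝ)) * (((kk:ℝ) + 1) * (Nat.factorial kk : ℝ))) * Q) =
          (c - 1) * (R * (b + (n:ℝ))) * (((kk:ℝ) + 1) * (A * (-((n:ℝ) + 1) + (kk:ℝ)) * Y
              / (P * (b + (kk:ℝ)) * (((kk:ℝ) + 1) * (Nat.factorial kk : ℝ))) * Q)) -
            c * (R * (b + (n:ℝ))) * (A * Y / (P * (Nat.factorial kk : ℝ)) * Q) +
            ((n:ℝ) + 1 + ((n:ℝ) + 1 + b) * c) * (R * (b + (n:ℝ))) *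
              (A * (-((n:ℝ) + 1) + (kk:ℝ)) * Y
                / (P * (b + (kk:ℝ)) * (((kk:ℝ) + 1) * (Nat.factorial kk : ℝ))) * Q) -
            ((n:ℝ) + b) * R * (A * (((n:ℝ) + 1 - (kk:ℝ)) * (-(n:ℝ) + (kk:ℝ))) * Y
              / (P * (b + (kk:ℝ)) * (((kk:ℝ) + 1) * (Nat.factorial kk : ℝ))) * Q) := by
        field_simp
        ring
      linear_combination main + (((n:ℝ)+b) * R * (-(n:ℝ)+(kk:ℝ)) *
        (Y / (P * (b + (kk:ℝ)) * (((kk:ℝ)+1) * (Nat.factorial kk : ℝ))) * Q)) * h3'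
  rw [← mul_assoc c, Finset.mul_sum, Finset.sum_congr rfl perk]
  have split : ∑ k ∈ Finset.range N,
      ((c-1) * poch b (n+1) * ((k:ℝ) * Tf b c y (-((n:ℝ)+1)) k) - E' k
        + ((((n:ℝ)+1) + ((n:ℝ)+1+b) * c) * poch b (n+1)) * Tf b c y (-((n:ℝ)+1)) k
        - ((((n:ℝ)+1) * ((n:ℝ)+b)) * poch b n) * Tf b c y (-(n:ℝ)) k)
      = (∑ k ∈ Finset.range N, (c-1) * poch b (n+1) * ((k:ℝ) * Tf b c y (-((n:ℝ)+1)) k))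
        - (∑ k ∈ Finset.range N, E' k)
        + (∑ k ∈ Finset.range N,
            ((((n:ℝ)+1) + ((n:ℝ)+1+b) * c) * poch b (n+1)) * Tf b c y (-((n:ℝ)+1)) k)
        - (∑ k ∈ Finset.range N,
            ((((n:ℝ)+1) * ((n:ℝ)+b)) * poch b n) * Tf b c y (-(n:ℝ)) k) := by
    simp only [Finset.sum_sub_distrib, Finset.sum_add_distrib]
  rw [split, ← hEsum]
  have stepA : (∑ k ∈ Finset.range N, (c-1) * poch b (n+1) * ((k:ℝ) * Tf b c y (-((n:ℝ)+1)) k))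
        - (∑ k ∈ Finset.range N, E k)
      = (c-1) * y * poch b (n+1) * ∑ k ∈ Finset.range N, Tf b c y (-((n:ℝ)+1)) k := by
    rw [← Finset.sum_sub_distrib, Finset.mul_sum]
    refine Finset.sum_congr rfl fun k _ => ?_
    simp only [hE, Tf]
    rw [poch_succ (-y) k]
    ring
  rw [stepA, ← Finset.mul_sum, ← Finset.mul_sum]
  ring

lemma meixner_one (b c y : ℝ) (hb : b ≠ 0) (hc : c ≠ 0) :
    c * meixner b c y 1 = b * c + y * (c - 1) := by
  unfold meixner
  rw [Finset.sum_range_succ, Finset.sum_range_one]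
  simp only [poch_succ, poch_zero, Nat.factorial_zero, Nat.factorial_one, pow_zero, pow_one,
    Nat.cast_zero, Nat.cast_one, Nat.cast_ofNat, add_zero, one_mul, mul_one]
  field_simp

theorem assoc_meixner_special_case (β c : ℝ) (hc0 : 0 < c) (hc1 : c < 1)
    (hβ0 : 0 < β) (hβ1 : β < 1)
    (M : ℕ → ℝ → ℝ) (hM : IsAssocMeixner β c (1 - β) M) :
    ∀ (n : ℕ) (x : ℝ), M n x = meixner (2 - β) c (x + β - 1) n := by
  obtain ⟨h0, h1, hrec⟩ := hM
  have hcne : c ≠ 0 := ne_of_gt hc0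
  have hb : (0:ℝ) < 2 - β := by linarith
  intro n x
  induction n using Nat.twoStepInduction with
  | zero => rw [h0 x, meixner_zero]
  | one =>
    apply mul_left_cancel₀ hcne
    rw [h1 x, meixner_one (2-β) c (x+β-1) (ne_of_gt hb) hcne]
    ring
  | more n ih1 ih2 =>
    apply mul_left_cancel₀ hcne
    rw [hrec x n, meixner_rec (2-β) c (x+β-1) hb hcne n, ih1, ih2]
    ring
end

section
/- Let α be real with α > −1, γ > 0 arbitrary real. For |t| < 1/2 and x real, Σ_{n=0}^∞ [γ/(n+γ)] L_n^{(α)}(x) t^n = (1−t)^{−γ} Σ_{m,j=0}^∞ [(γ)_{m+j} (γ−α)_m / ((γ+1)_{m+j} m! j!)] (t/(t−1))^m (xt/(t−1))^j, where L_n^{(α)}(x) = Σ_{k=0}^n (−1)^k (α+1)_n/((α+1)_k (n−k)! k!) x^k are the classical Laguerre polynomials. -/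
/-- Classical Laguerre polynomials \(L_n^{(\alpha)}(x)\). -/
noncomputable def laguerre (α x : ℝ) (n : ℕ) : ℝ :=
  ∑ k ∈ Finset.range (n + 1),
    (-1) ^ k * poch (α + 1) n /
      (poch (α + 1) k * (Nat.factorial (n - k)) * (Nat.factorial k)) * x ^ k

/-!
Since `(γ)_{m+j} / (γ+1)_{m+j} = γ / (γ+m+j)` and `t/(t-1) = -t/(1-t)`, the `(m, j)` term of
`(1-t)^{-γ} Φ₁` is `c_{m,j} t^{m+j} (1-t)^{-(γ+m+j)}`. Expanding `(1-t)^{-(γ+m+j)}` by the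
binomial series gives a triple series in `(m, j, n)`, absolutely convergent for `|t| < 1/2`.
Collecting the terms with `m + j + n = N`, the inner sum over `m + n = N - j` collapses by the
Chu–Vandermonde identity to a multiple of `(α+1+j)_{N-j}`, and what is left is
`γ/(N+γ) L_N^{(α)}(x) t^N`.
-/

open Finset

open scoped Nat

lemma poch_eq_ascPochhammer_eval (a : ℝ) (n : ℕ) : poch a n = (ascPochhammer ℝ n).eval a := by
  induction n with
  | zero => simp [poch]
  | succ n ih => rw [poch, prod_range_succ, ← poch, ih, ascPochhammer_succ_eval]

lemma poch_div_factorial (a : ℝ) (n : ℕ) : poch a n / n ! = Ring.multichoose a n := by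
  rw [div_eq_iff (by positivity), mul_comm, ← nsmul_eq_mul,
    Ring.factorial_nsmul_multichoose_eq_ascPochhammer, Polynomial.ascPochhammer_smeval_eq_eval,
    poch_eq_ascPochhammer_eval]

lemma poch_add (a : ℝ) (m n : ℕ) : poch a (m + n) = poch a m * poch (a + m) n := by
  simp only [poch, prod_range_add, add_assoc, Nat.cast_add]

lemma poch_mul_add (a : ℝ) (n : ℕ) : poch a n * (a + n) = a * poch (a + 1) n := by
  have h := poch_add a n 1
  rw [add_comm n 1, poch_add] at h
  simpa [poch, mul_comm, add_comm 1 a] using h.symm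

lemma poch_div_eq_poch_succ_div {c : ℝ} {n : ℕ} (hc : c ≠ 0) (hcn : c + n ≠ 0) :
    poch c n / c = poch (c + 1) n / (c + n) := by
  rw [div_eq_div_iff hc hcn, poch_mul_add, mul_comm]

lemma poch_pos_s19 {a : ℝ} (ha : 0 < a) (n : ℕ) : 0 < poch a n :=
  prod_pos fun _ _ => by positivity

lemma poch_nonneg {a : ℝ} (ha : 0 ≤ a) (n : ℕ) : 0 ≤ poch a n :=
  prod_nonneg fun _ _ => by positivity

lemma abs_poch_le (a : ℝ) (n : ℕ) : |poch a n| ≤ poch |a| n := by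
  rw [poch, poch, abs_prod]
  exact prod_le_prod (fun _ _ => abs_nonneg _) fun i _ =>
    (abs_add_le _ _).trans_eq (by rw [Nat.abs_cast])

/-- Chu–Vandermonde, applied to `choose (-a + (b + r - 1)) r`. -/
theorem Ring.multichoose_sub_eq_sum_antidiagonal {R : Type*} [CommRing R] [BinomialRing R]
    (a b : R) (r : ℕ) :
    multichoose (b - a) r =
      ∑ ij ∈ antidiagonal r, (-1) ^ ij.1 * multichoose a ij.1 * multichoose (b + ij.1) ij.2 := by
  rw [multichoose_eq, show b - a + r - 1 = -a + (b + r - 1) by abel,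
    add_choose_eq r (Commute.all _ _)]
  refine sum_congr rfl fun ij hij => ?_
  rw [HasAntidiagonal.mem_antidiagonal] at hij
  rw [choose_neg', multichoose_eq (b + ij.1), ← hij, Int.negOnePow_def, zpow_natCast,
    Units.smul_def, Nat.cast_add, add_assoc]
  simp

lemma sum_antidiagonal_neg_one_pow_poch_mul_poch (a b : ℝ) (r : ℕ) :
    ∑ ij ∈ antidiagonal r, (-1) ^ ij.1 * (poch a ij.1 / ij.1 !) * (poch (b + ij.1) ij.2 / ij.2 !) =
      poch (b - a) r / r ! := by
  simp only [poch_div_factorial, Ring.multichoose_sub_eq_sum_antidiagonal]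

theorem hasSum_poch_div_factorial_mul_pow (a : ℝ) {y : ℝ} (hy : |y| < 1) :
    HasSum (fun n => poch a n / n ! * y ^ n) ((1 - y) ^ (-a)) := by
  have := (Real.one_div_one_sub_rpow_hasFPowerSeriesOnBall_zero a).hasSum
    (y := y) (by simpa [enorm_eq_nnnorm, ← NNReal.coe_lt_coe] using hy)
  simp only [FormalMultilinearSeries.ofScalars_apply_eq, one_div, smul_eq_mul, zero_add] at this
  rw [Real.rpow_neg (by linarith [le_abs_self y])]
  simpa only [poch_div_factorial, Ring.multichoose_eq] using this

theorem hasSum_poch_div_factorial_mul_pow_add (γ : ℝ) (s : ℕ) {t : ℝ} (ht : |t| < 1) :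
    HasSum (fun n => poch (γ + s) n / n ! * t ^ (s + n)) ((1 - t) ^ (-γ) * (t / (1 - t)) ^ s) := by
  have h1t : 0 < 1 - t := by linarith [le_abs_self t]
  have e : (1 - t) ^ (-γ) * (t / (1 - t)) ^ s = t ^ s * (1 - t) ^ (-(γ + s)) := by
    rw [neg_add, Real.rpow_add h1t, Real.rpow_neg h1t.le, Real.rpow_neg h1t.le,
      Real.rpow_natCast, div_pow]
    ring
  rw [e]
  exact ((hasSum_poch_div_factorial_mul_pow (γ + s) ht).mul_left (t ^ s)).congr_fun
    fun n => by ring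

section Regroup

variable {α β γ : Type*} [AddCommMonoid α] [TopologicalSpace α] [ContinuousAdd α] [RegularSpace α]

theorem HasSum.sum_finset_fiberwise {f : β → α} {a : α} (hf : HasSum f a) (g : β → γ)
    (s : γ → Finset β) (hs : ∀ c b, b ∈ s c ↔ g b = c) : HasSum (fun c => ∑ b ∈ s c, f b) a :=
  ((Equiv.sigmaFiberEquiv g).hasSum_iff.2 hf).sigma fun c =>
    (Equiv.subtypeEquivRight fun b => (hs c b).symm).hasSum_iff.2 ((s c).hasSum f)

variable {A : Type*} [AddCommMonoid A] [HasAntidiagonal A]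

theorem HasSum.sum_antidiagonal {f : A × A → α} {a : α} (hf : HasSum f a) :
    HasSum (fun n => ∑ p ∈ antidiagonal n, f p) a :=
  hf.sum_finset_fiberwise (fun p => p.1 + p.2) antidiagonal fun _ _ =>
    HasAntidiagonal.mem_antidiagonal

theorem HasSum.sum_antidiagonal_snd {f : β × (A × A) → α} {a : α} (hf : HasSum f a) :
    HasSum (fun p : β × A => ∑ q ∈ antidiagonal p.2, f (p.1, q)) a := by
  simpa [sum_product] using hf.sum_finset_fiberwise (fun p => (p.1, p.2.1 + p.2.2))
    (fun p => {p.1} ×ˢ antidiagonal p.2) fun _ _ => by simp [Prod.ext_iff, eq_comm, and_comm]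

end Regroup

lemma laguerre_eq_sum_antidiagonal {α : ℝ} (hα : -1 < α) (x : ℝ) (N : ℕ) :
    laguerre α x N =
      ∑ jr ∈ antidiagonal N, (-x) ^ jr.1 / jr.1 ! * (poch (α + 1 + jr.1) jr.2 / jr.2 !) := by
  rw [laguerre, Nat.sum_antidiagonal_eq_sum_range_succ_mk]
  refine sum_congr rfl fun k hk => ?_
  have hkN : k + (N - k) = N := Nat.add_sub_cancel' (Nat.lt_succ_iff.mp (mem_range.mp hk))
  have hpoch : poch (α + 1) k ≠ 0 := (poch_pos_s19 (by linarith) k).ne'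
  conv_lhs => rw [← hkN, poch_add, hkN]
  rw [neg_pow x]
  field_simp

section Expansion

variable (α γ x t : ℝ)

/-- The `(m, j)` term of `Φ₁[γ, γ-α; γ+1; t/(t-1), xt/(t-1)]` is
`phiCoeff α γ x m j * (t / (1 - t)) ^ (m + j)`. -/
noncomputable def phiCoeff (m j : ℕ) : ℝ :=
  γ / (γ + m + j) * ((-1) ^ m * (poch (γ - α) m / m !)) * ((-x) ^ j / j !)

/-- The terms obtained by expanding `(1 - t) ^ (-(γ + m + j))` binomially in each term of
`(1 - t) ^ (-γ) * Φ₁`. -/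
noncomputable def expandedTerm (p : (ℕ × ℕ) × ℕ) : ℝ :=
  phiCoeff α γ x p.1.1 p.1.2 *
    (poch (γ + (p.1.1 + p.1.2 : ℕ)) p.2 / p.2 ! * t ^ (p.1.1 + p.1.2 + p.2))

variable {α γ x t}

lemma phi_term_eq_phiCoeff_mul_pow (hγ : 0 < γ) (m j : ℕ) :
    poch γ (m + j) * poch (γ - α) m /
        (poch (γ + 1) (m + j) * (Nat.factorial m) * (Nat.factorial j)) *
        (t / (t - 1)) ^ m * (x * t / (t - 1)) ^ j =
      phiCoeff α γ x m j * (t / (1 - t)) ^ (m + j) := by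
  have hratio : poch γ (m + j) / poch (γ + 1) (m + j) = γ / (γ + m + j) := by
    rw [div_eq_div_iff (poch_pos_s19 (by linarith) _).ne' (by positivity), mul_comm,
      add_assoc, ← Nat.cast_add, mul_comm, poch_mul_add]
  have h1 : t / (t - 1) = -(t / (1 - t)) := by rw [← div_neg, neg_sub]
  have h2 : x * t / (t - 1) = -x * (t / (1 - t)) := by rw [mul_div_assoc, h1, mul_neg, neg_mul]
  rw [phiCoeff, ← hratio, h1, h2, mul_pow, neg_pow (t / (1 - t)), pow_add]
  field_simp

lemma abs_phiCoeff_le (hγ : 0 < γ) (m j : ℕ) :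
    |phiCoeff α γ x m j| ≤ poch |γ - α| m / m ! * (|x| ^ j / j !) := by
  have hfrac : |γ| / |γ + m + j| ≤ 1 := by
    rw [abs_of_pos hγ, abs_of_pos (by positivity)]
    exact div_le_one_of_le₀ (by linarith [m.cast_nonneg (α := ℝ), j.cast_nonneg (α := ℝ)])
      (by positivity)
  simp only [phiCoeff, abs_mul, abs_div, abs_pow, abs_neg, abs_one, one_pow, one_mul, Nat.abs_cast]
  rw [mul_assoc]
  refine (mul_le_of_le_one_left (by positivity) hfrac).trans ?_
  gcongr
  exact abs_poch_le _ _

lemma summable_abs_phiCoeff_mul_pow (hγ : 0 < γ) {w : ℝ} (hw0 : 0 ≤ w) (hw1 : w < 1) :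
    Summable fun p : ℕ × ℕ => |phiCoeff α γ x p.1 p.2| * w ^ (p.1 + p.2) := by
  have hbinom : Summable fun m : ℕ => poch |γ - α| m / m ! * w ^ m :=
    (hasSum_poch_div_factorial_mul_pow _ (by rwa [abs_of_nonneg hw0])).summable
  have hprod := hbinom.mul_of_nonneg (Real.summable_pow_div_factorial (|x| * w))
    (fun m => by have := poch_nonneg (abs_nonneg (γ - α)) m; positivity)
    (fun j => by positivity)
  refine hprod.of_nonneg_of_le (fun p => by positivity) fun p => ?_
  calc |phiCoeff α γ x p.1 p.2| * w ^ (p.1 + p.2)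
      ≤ poch |γ - α| p.1 / p.1 ! * (|x| ^ p.2 / p.2 !) * w ^ (p.1 + p.2) := by
        gcongr
        exact abs_phiCoeff_le hγ _ _
    _ = _ := by rw [pow_add, mul_pow]; ring

lemma hasSum_expandedTerm_fiber (ht : |t| < 1) (m j : ℕ) :
    HasSum (fun n => expandedTerm α γ x t ((m, j), n))
      ((1 - t) ^ (-γ) * (phiCoeff α γ x m j * (t / (1 - t)) ^ (m + j))) := by
  rw [mul_left_comm]
  exact (hasSum_poch_div_factorial_mul_pow_add γ (m + j) ht).mul_left _

lemma summable_abs_expandedTerm (hγ : 0 < γ) (ht : |t| < 1 / 2) :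
    Summable fun p => |expandedTerm α γ x t p| := by
  set q := |t|
  -- the fibre sums are `|c_{m,j}| (1-q)^{-γ} (q/(1-q))^{m+j}`, and `q/(1-q) < 1` needs `q < 1/2`
  have hq : |q| < 1 := by rw [abs_abs]; linarith
  have hw0 : 0 ≤ q / (1 - q) := div_nonneg (abs_nonneg t) (by linarith)
  have hw1 : q / (1 - q) < 1 := (div_lt_one (by linarith)).2 (by linarith)
  have hnonneg (p : (ℕ × ℕ) × ℕ) : 0 ≤ poch (γ + (p.1.1 + p.1.2 : ℕ)) p.2 :=
    poch_nonneg (by positivity) _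
  have habs (p : (ℕ × ℕ) × ℕ) : |expandedTerm α γ x t p| =
      |phiCoeff α γ x p.1.1 p.1.2| *
        (poch (γ + (p.1.1 + p.1.2 : ℕ)) p.2 / p.2 ! * q ^ (p.1.1 + p.1.2 + p.2)) := by
    rw [expandedTerm, abs_mul, abs_mul, abs_div, abs_pow, Nat.abs_cast, abs_of_nonneg (hnonneg p)]
  simp only [habs]
  have hfiber (p : ℕ × ℕ) := (hasSum_poch_div_factorial_mul_pow_add γ (p.1 + p.2) hq).mul_left
    |phiCoeff α γ x p.1 p.2|
  refine (summable_prod_of_nonneg fun p => by have := hnonneg p; positivity).2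
    ⟨fun p => (hfiber p).summable, ?_⟩
  simp only [fun p => (hfiber p).tsum_eq, mul_left_comm _ ((1 - q) ^ (-γ))]
  exact (summable_abs_phiCoeff_mul_pow hγ hw0 hw1).mul_left _

lemma hasSum_phiCoeff_mul_pow (hγ : 0 < γ) (ht : |t| < 1 / 2) :
    HasSum
      (fun p : ℕ × ℕ => (1 - t) ^ (-γ) * (phiCoeff α γ x p.1 p.2 * (t / (1 - t)) ^ (p.1 + p.2)))
      (∑' p, expandedTerm α γ x t p) :=
  (summable_abs_expandedTerm hγ ht).of_abs.hasSum.prod_fiberwise fun p =>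
    hasSum_expandedTerm_fiber (by linarith) p.1 p.2

lemma sum_antidiagonal_expandedTerm (hγ : 0 < γ) (j r : ℕ) :
    ∑ mn ∈ antidiagonal r, expandedTerm α γ x t ((mn.1, j), mn.2) =
      γ / (γ + j + r) * ((-x) ^ j / j ! * (poch (α + 1 + j) r / r !)) * t ^ (j + r) := by
  have hterm : ∀ mn ∈ antidiagonal r, expandedTerm α γ x t ((mn.1, j), mn.2) =
      γ / (γ + j + r) * ((-x) ^ j / j !) * t ^ (j + r) *
        ((-1) ^ mn.1 * (poch (γ - α) mn.1 / mn.1 !) *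
          (poch (γ + j + 1 + mn.1) mn.2 / mn.2 !)) := by
    rintro ⟨m, n⟩ hmn
    rw [HasAntidiagonal.mem_antidiagonal] at hmn
    subst hmn
    have hshift : poch (γ + (m + j : ℕ)) n / (γ + m + j) =
        poch (γ + j + 1 + m) n / (γ + j + (m + n : ℕ)) := by
      rw [Nat.cast_add, ← add_assoc, poch_div_eq_poch_succ_div (by positivity) (by positivity),
        show γ + m + j + 1 = γ + j + 1 + m by ring, Nat.cast_add]
      ring
    calc expandedTerm α γ x t ((m, j), n)
        = γ * (poch (γ + (m + j : ℕ)) n / (γ + m + j)) * ((-1) ^ m * (poch (γ - α) m / m !)) *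
            ((-x) ^ j / j !) * t ^ (j + (m + n)) / n ! := by
          simp only [expandedTerm, phiCoeff]
          ring
      _ = _ := by
          rw [hshift]
          ring
  rw [sum_congr rfl hterm, ← mul_sum, sum_antidiagonal_neg_one_pow_poch_mul_poch,
    show γ + j + 1 - (γ - α) = α + 1 + j by ring]
  ring

lemma HasSum.laguerre_of_expandedTerm (hα : -1 < α) (hγ : 0 < γ) {S : ℝ}
    (h : HasSum (expandedTerm α γ x t) S) :
    HasSum (fun N : ℕ => γ / ((N : ℝ) + γ) * laguerre α x N * t ^ N) S := by
  have hjmn : HasSum (fun p : ℕ × (ℕ × ℕ) => expandedTerm α γ x t ((p.2.1, p.1), p.2.2)) S :=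
    ((Equiv.prodAssoc ℕ ℕ ℕ).symm.trans
      ((Equiv.prodComm ℕ ℕ).prodCongr (Equiv.refl ℕ))).hasSum_iff.2 h
  refine hjmn.sum_antidiagonal_snd.sum_antidiagonal.congr_fun fun N => ?_
  simp only [sum_antidiagonal_expandedTerm hγ, laguerre_eq_sum_antidiagonal hα, mul_sum, sum_mul]
  refine sum_congr rfl fun jr hjr => ?_
  rw [HasAntidiagonal.mem_antidiagonal] at hjr
  rw [← hjr]
  push_cast
  ring

end Expansion

/-- Modified generating function of Laguerre polynomials in terms of the Humbert
function \(\Phi_1[\gamma, \gamma-\alpha; \gamma+1; t/(t-1), xt/(t-1)]\). -/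
theorem laguerre_modified_generating_function (α γ x t : ℝ) (hα : -1 < α) (hγ : 0 < γ)
    (ht : |t| < 1 / 2) :
    HasSum (fun n : ℕ => γ / ((n : ℝ) + γ) * laguerre α x n * t ^ n)
      ((1 - t) ^ (-γ) *
        ∑' p : ℕ × ℕ,
          poch γ (p.1 + p.2) * poch (γ - α) p.1 /
            (poch (γ + 1) (p.1 + p.2) * (Nat.factorial p.1) * (Nat.factorial p.2)) *
            (t / (t - 1)) ^ p.1 * (x * t / (t - 1)) ^ p.2) := by
  have h1t : (1 - t) ^ (-γ) ≠ 0 := (Real.rpow_pos_of_pos (by linarith [le_abs_self t]) _).ne'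
  have hphi : HasSum (fun p : ℕ × ℕ => phiCoeff α γ x p.1 p.2 * (t / (1 - t)) ^ (p.1 + p.2))
      (((1 - t) ^ (-γ))⁻¹ * ∑' p, expandedTerm α γ x t p) := by
    simpa only [inv_mul_cancel_left₀ h1t] using
      (hasSum_phiCoeff_mul_pow hγ ht).mul_left ((1 - t) ^ (-γ))⁻¹
  simp only [phi_term_eq_phiCoeff_mul_pow hγ, hphi.tsum_eq, mul_inv_cancel_left₀ h1t]
  exact (summable_abs_expandedTerm hγ ht).of_abs.hasSum.laguerre_of_expandedTerm hα hγ
end
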